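/- arXiv:2511.23403 — 3 statements merged into one kernel-verified Lean document; each statement's English description precedes it below -/
import Mathlib

section
/- For any t > 0, δ > 0, there is a constant C > 0 (depending neither on ε nor on r) such that for all 0 < ε < 1 and 0 ≤ r ≤ t: ∫_r^{r+δ} (1/ε) ∫_{−π}^{π} exp(−(2s/ε²)(1 − cos z)) dz ds ≤ C √δ. -/
open Real MeasureTheory intervalIntegral

lemma one_sub_cos_lower {z : ℝ} (hz : |z| ≤ Real.pi) :
    2 / Real.pi ^ 2 * z ^ 2 ≤ 1 - Real.cos z := by
  have hπ := Real.pi_pos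
  have habs : (0:ℝ) ≤ |z| := abs_nonneg z
  have h1 : 2 / Real.pi * (|z| / 2) ≤ Real.sin (|z| / 2) :=
    Real.mul_le_sin (by positivity) (by linarith)
  have h2 : Real.sin (|z| / 2) ^ 2 = Real.sin (z / 2) ^ 2 := by
    rcases abs_cases z with ⟨h, _⟩ | ⟨h, _⟩
    · rw [h]
    · rw [h, neg_div, Real.sin_neg, neg_sq]
  have h3 : 1 - Real.cos z = 2 * Real.sin (z / 2) ^ 2 := by
    have hc := Real.cos_two_mul (z / 2)
    rw [show 2 * (z / 2) = z by ring] at hc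
    have hs := Real.sin_sq_add_cos_sq (z / 2)
    nlinarith
  have h4 : (2 / Real.pi * (|z| / 2)) ^ 2 ≤ Real.sin (|z| / 2) ^ 2 :=
    pow_le_pow_left₀ (by positivity) h1 2
  have h5 : 2 / Real.pi ^ 2 * z ^ 2 = 2 * (2 / Real.pi * (|z| / 2)) ^ 2 := by
    rw [mul_pow, div_pow, div_pow, sq_abs]
    ring
  rw [h3, ← h2, h5]
  linarith

theorem char_fn_time_integral_bound (t δ : ℝ) (ht : 0 < t) (hδ : 0 < δ) :
    ∃ C > (0:ℝ), ∀ ε : ℝ, 0 < ε → ε < 1 → ∀ r : ℝ, 0 ≤ r → r ≤ t →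
      (∫ s in r..(r + δ), (1 / ε) * ∫ z in (-Real.pi)..Real.pi,
          Real.exp (-(2 * s / ε ^ 2) * (1 - Real.cos z))) ≤ C * Real.sqrt δ := by
  have hπ := Real.pi_pos
  refine ⟨Real.pi * Real.sqrt Real.pi, by positivity, ?_⟩
  intro ε hε hε1 r hr hrt
  set c : ℝ := Real.pi * Real.sqrt Real.pi / 2 with hc
  have hc0 : 0 < c := by positivity
  set f : ℝ → ℝ := fun s => (1 / ε) * ∫ z in (-Real.pi)..Real.pi,
      Real.exp (-(2 * s / ε ^ 2) * (1 - Real.cos z)) with hf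
  set g : ℝ → ℝ := fun s => c * s ^ (-(1:ℝ)/2 : ℝ) with hg
  by_cases hInt : IntervalIntegrable f volume r (r + δ)
  · -- pointwise bound on Ioc
    have key : ∀ s ∈ Set.Ioc r (r + δ), f s ≤ g s := by
      intro s hs
      have hs0 : 0 < s := lt_of_le_of_lt hr hs.1
      set b : ℝ := 4 * s / (Real.pi ^ 2 * ε ^ 2) with hb
      have hb0 : 0 < b := by positivity
      have step1 : ∀ z ∈ Set.Icc (-Real.pi) Real.pi,
          Real.exp (-(2 * s / ε ^ 2) * (1 - Real.cos z)) ≤ Real.exp (-b * z ^ 2) := by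
        intro z hz
        apply Real.exp_le_exp.2
        have hzabs : |z| ≤ Real.pi := abs_le.2 ⟨hz.1, hz.2⟩
        have := one_sub_cos_lower hzabs
        have h2s : 0 ≤ 2 * s / ε ^ 2 := by positivity
        have : (2 * s / ε ^ 2) * (2 / Real.pi ^ 2 * z ^ 2) ≤
            (2 * s / ε ^ 2) * (1 - Real.cos z) := by
          apply mul_le_mul_of_nonneg_left this h2s
        have heq : (2 * s / ε ^ 2) * (2 / Real.pi ^ 2 * z ^ 2) = b * z ^ 2 := by
          rw [hb]; field_simp; ring
        nlinarith
      have cont1 : Continuous fun z : ℝ => Real.exp (-(2 * s / ε ^ 2) * (1 - Real.cos z)) := by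
        fun_prop
      have cont2 : Continuous fun z : ℝ => Real.exp (-b * z ^ 2) := by fun_prop
      have step2 : (∫ z in (-Real.pi)..Real.pi,
          Real.exp (-(2 * s / ε ^ 2) * (1 - Real.cos z))) ≤
          ∫ z in (-Real.pi)..Real.pi, Real.exp (-b * z ^ 2) := by
        apply intervalIntegral.integral_mono_on (by linarith)
          (cont1.intervalIntegrable _ _) (cont2.intervalIntegrable _ _)
        intro z hz
        exact step1 z hz
      have step3 : (∫ z in (-Real.pi)..Real.pi, Real.exp (-b * z ^ 2)) ≤
          Real.sqrt (Real.pi / b) := by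
        rw [← integral_gaussian b]
        rw [intervalIntegral.integral_of_le (by linarith)]
        exact setIntegral_le_integral (integrable_exp_neg_mul_sq hb0)
          (Filter.Eventually.of_forall fun x => (Real.exp_pos _).le)
      have step4 : Real.sqrt (Real.pi / b) ≤ ε * c * s ^ (-(1:ℝ)/2 : ℝ) := by
        have hrs : s ^ (-(1:ℝ)/2 : ℝ) = (Real.sqrt s)⁻¹ := by
          rw [show (-(1:ℝ)/2 : ℝ) = -(1/2 : ℝ) by norm_num,
            Real.rpow_neg hs0.le, ← Real.sqrt_eq_rpow]
        rw [hrs]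
        have h1 : Real.pi / b = Real.pi ^ 3 * ε ^ 2 / (4 * s) := by
          rw [hb]; field_simp
        rw [h1]
        have hrhs : 0 ≤ ε * c * (Real.sqrt s)⁻¹ := by positivity
        rw [show Real.pi ^ 3 * ε ^ 2 / (4 * s) = (ε * c * (Real.sqrt s)⁻¹) ^ 2 by
          rw [hc]; rw [mul_pow, mul_pow, inv_pow, Real.sq_sqrt hs0.le, div_pow, mul_pow,
            Real.sq_sqrt hπ.le]; ring]
        rw [Real.sqrt_sq hrhs]
      calc f s = (1 / ε) * ∫ z in (-Real.pi)..Real.pi,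
            Real.exp (-(2 * s / ε ^ 2) * (1 - Real.cos z)) := rfl
        _ ≤ (1 / ε) * Real.sqrt (Real.pi / b) := by
            apply mul_le_mul_of_nonneg_left (step2.trans step3) (by positivity)
        _ ≤ (1 / ε) * (ε * c * s ^ (-(1:ℝ)/2 : ℝ)) := by
            apply mul_le_mul_of_nonneg_left step4 (by positivity)
        _ = g s := by
            simp only [hg]
            field_simp
    -- integrability of g
    have hgInt : IntervalIntegrable g volume r (r + δ) := by
      apply IntervalIntegrable.const_mul
      exact intervalIntegral.intervalIntegrable_rpow' (by norm_num)
    have hmono : (∫ s in r..(r + δ), f s) ≤ ∫ s in r..(r + δ), g s := by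
      rw [intervalIntegral.integral_of_le (by linarith),
        intervalIntegral.integral_of_le (by linarith : r ≤ r + δ)]
      apply setIntegral_mono_on hInt.1 hgInt.1 measurableSet_Ioc key
    have hgval : (∫ s in r..(r + δ), g s) =
        c * (((r + δ) ^ ((1:ℝ)/2 : ℝ) - r ^ ((1:ℝ)/2 : ℝ)) / (1/2)) := by
      rw [hg]
      rw [intervalIntegral.integral_const_mul]
      rw [integral_rpow (Or.inl (by norm_num))]
      norm_num
    have hsq : Real.sqrt (r + δ) - Real.sqrt r ≤ Real.sqrt δ := by
      have h1 : Real.sqrt (r + δ) ≤ Real.sqrt r + Real.sqrt δ := by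
        rw [show r + δ = r + δ by ring]
        have h2 : r + δ ≤ (Real.sqrt r + Real.sqrt δ) ^ 2 := by
          have := Real.sq_sqrt hr
          have := Real.sq_sqrt hδ.le
          have := Real.sqrt_nonneg r
          have := Real.sqrt_nonneg δ
          nlinarith
        calc Real.sqrt (r + δ) ≤ Real.sqrt ((Real.sqrt r + Real.sqrt δ) ^ 2) :=
              Real.sqrt_le_sqrt h2
          _ = Real.sqrt r + Real.sqrt δ := Real.sqrt_sq (by positivity)
      linarith
    have hfin : (∫ s in r..(r + δ), g s) ≤ Real.pi * Real.sqrt Real.pi * Real.sqrt δ := by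
      rw [hgval]
      have hr1 : (r + δ) ^ ((1:ℝ)/2 : ℝ) = Real.sqrt (r + δ) := by
        rw [← Real.sqrt_eq_rpow]
      have hr2 : r ^ ((1:ℝ)/2 : ℝ) = Real.sqrt r := by rw [← Real.sqrt_eq_rpow]
      rw [hr1, hr2, hc]
      have : (Real.sqrt (r + δ) - Real.sqrt r) / (1/2) =
          2 * (Real.sqrt (r + δ) - Real.sqrt r) := by ring
      rw [this]
      nlinarith [Real.sqrt_nonneg Real.pi]
    exact hmono.trans hfin
  · rw [show (∫ s in r..(r + δ), (1 / ε) * ∫ z in (-Real.pi)..Real.pi,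
        Real.exp (-(2 * s / ε ^ 2) * (1 - Real.cos z))) = ∫ s in r..(r + δ), f s from rfl,
      intervalIntegral.integral_undef hInt]
    positivity
end

section
/- Singular Gronwall lemma: Let T > 0 and let S : [0, T] → [0, ∞) be measurable and bounded, satisfying S(t) ≤ A + B ∫₀^t S(s)/√(t−s) ds for all t ∈ [0, T], where A, B ≥ 0. Then there is a constant C depending only on B and T such that S(t) ≤ C·A for all t ∈ [0, T]. -/
open Set MeasureTheory

/-- iterated Gronwall constants -/
noncomputable def gronC (B T : ℝ) : ℕ → ℝ := fun k =>
  Nat.rec 1 (fun _ x => 2 + 4*B*Real.sqrt T * x) k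

@[simp] lemma gronC_zero (B T : ℝ) : gronC B T 0 = 1 := rfl
@[simp] lemma gronC_succ (B T : ℝ) (k : ℕ) :
    gronC B T (k+1) = 2 + 4*B*Real.sqrt T * gronC B T k := rfl

lemma gronC_ge_one (B T : ℝ) (hB : 0 ≤ B) (k : ℕ) : 1 ≤ gronC B T k := by
  induction k with
  | zero => simp [gronC]
  | succ k ih =>
    have h1 : 0 ≤ 4*B*Real.sqrt T := by positivity
    have := mul_le_mul_of_nonneg_left ih h1
    rw [gronC_succ]; nlinarith

lemma kernel_intable (t a b : ℝ) :
    IntervalIntegrable (fun s => (t - s) ^ (-(1/2) : ℝ)) volume a b := by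
  have h : IntervalIntegrable (fun x : ℝ => x ^ (-(1/2) : ℝ)) volume (t - a) (t - b) :=
    intervalIntegral.intervalIntegrable_rpow' (by norm_num)
  simpa using h.comp_sub_left t

lemma kernel_integral (t a b : ℝ) (hab : a ≤ b) (hbt : b ≤ t) :
    ∫ s in a..b, (t - s) ^ (-(1/2) : ℝ)
      = 2*Real.sqrt (t-a) - 2*Real.sqrt (t-b) := by
  rw [intervalIntegral.integral_comp_sub_left (fun x : ℝ => x ^ (-(1/2) : ℝ)) t]
  rw [integral_rpow (Or.inl (by norm_num))]
  have h1 : -(1/2 : ℝ) + 1 = 1/2 := by norm_num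
  rw [h1, Real.sqrt_eq_rpow, Real.sqrt_eq_rpow]
  ring

lemma pointwise_bound (S : ℝ → ℝ) (t K : ℝ) (hK : 0 ≤ K) {s : ℝ} (hst : s ≤ t)
    (hSs : S s ≤ K) (hS0 : 0 ≤ S s) :
    S s / Real.sqrt (t - s) ≤ K * (t - s) ^ (-(1/2) : ℝ) := by
  rcases eq_or_lt_of_le hst with h | h
  · rw [← h]
    simp [Real.zero_rpow (by norm_num : (-(1/2):ℝ) ≠ 0)]
  · have hts : 0 < t - s := by linarith
    have hsq : 0 < Real.sqrt (t - s) := Real.sqrt_pos.2 hts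
    have h2 : (t - s) ^ (-(1/2) : ℝ) = (Real.sqrt (t - s))⁻¹ := by
      rw [Real.rpow_neg hts.le, Real.sqrt_eq_rpow]
    rw [h2, ← div_eq_mul_inv]
    exact div_le_div_of_nonneg_right hSs hsq.le

lemma f_intable (S : ℝ → ℝ) (hS : Measurable S) (t a b K : ℝ) (hab : a ≤ b) (hbt : b ≤ t)
    (hK : 0 ≤ K) (hbd : ∀ s ∈ Icc a b, 0 ≤ S s ∧ S s ≤ K) :
    IntervalIntegrable (fun s => S s / Real.sqrt (t - s)) volume a b := by
  have hg : IntervalIntegrable (fun s => K * (t - s) ^ (-(1/2) : ℝ)) volume a b :=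
    (kernel_intable t a b).const_mul K
  apply hg.mono_fun'
  · exact ((hS.div ((measurable_const.sub measurable_id).sqrt)).aestronglyMeasurable).restrict
  · apply ae_restrict_of_forall_mem (by measurability)
    intro s hs
    rw [uIoc_of_le hab] at hs
    have hs' : s ∈ Icc a b := Ioc_subset_Icc_self hs
    obtain ⟨h0, hK'⟩ := hbd s hs'
    have : 0 ≤ S s / Real.sqrt (t - s) := div_nonneg h0 (Real.sqrt_nonneg _)
    have := pointwise_bound S t K hK (le_trans hs'.2 hbt) hK' h0
    simp only [Real.norm_eq_abs, abs_of_nonneg ‹0 ≤ S s / Real.sqrt (t - s)›]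
    exact this

lemma f_int_le (S : ℝ → ℝ) (hS : Measurable S) (t a b K : ℝ) (hab : a ≤ b) (hbt : b ≤ t)
    (hK : 0 ≤ K) (hbd : ∀ s ∈ Icc a b, 0 ≤ S s ∧ S s ≤ K) :
    ∫ s in a..b, S s / Real.sqrt (t - s) ≤ K * (2*Real.sqrt (t-a) - 2*Real.sqrt (t-b)) := by
  have hg : IntervalIntegrable (fun s => K * (t - s) ^ (-(1/2) : ℝ)) volume a b :=
    (kernel_intable t a b).const_mul K
  have hf := f_intable S hS t a b K hab hbt hK hbd
  calc ∫ s in a..b, S s / Real.sqrt (t - s)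
      ≤ ∫ s in a..b, K * (t - s) ^ (-(1/2) : ℝ) := by
        apply intervalIntegral.integral_mono_on hab hf hg
        intro s hs
        exact pointwise_bound S t K hK (le_trans hs.2 hbt) (hbd s hs).2 (hbd s hs).1
    _ = K * (2*Real.sqrt (t-a) - 2*Real.sqrt (t-b)) := by
        rw [intervalIntegral.integral_const_mul, kernel_integral t a b hab hbt]

theorem singular_gronwall (T B : ℝ) (hT : 0 < T) (hB : 0 ≤ B) :
    ∃ C > (0:ℝ), ∀ (A : ℝ) (S : ℝ → ℝ), 0 ≤ A → Measurable S →
      (∀ t ∈ Icc (0:ℝ) T, 0 ≤ S t) → (∃ M, ∀ t ∈ Icc (0:ℝ) T, S t ≤ M) →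
      (∀ t ∈ Icc (0:ℝ) T, S t ≤ A + B * ∫ s in (0:ℝ)..t, S s / Real.sqrt (t - s)) →
      ∀ t ∈ Icc (0:ℝ) T, S t ≤ C * A := by
  set δ : ℝ := min T (1/(16*(B+1)^2)) with hδdef
  have hδ0 : 0 < δ := lt_min hT (by positivity)
  have hδT : δ ≤ T := min_le_left _ _
  have hsqδ : Real.sqrt δ ≤ 1/(4*(B+1)) := by
    have h1 : δ ≤ 1/(16*(B+1)^2) := min_le_right _ _
    have h2 : (1:ℝ)/(16*(B+1)^2) = (1/(4*(B+1)))^2 := by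
      field_simp; ring
    calc Real.sqrt δ ≤ Real.sqrt ((1/(4*(B+1)))^2) := Real.sqrt_le_sqrt (h2 ▸ h1)
      _ = 1/(4*(B+1)) := Real.sqrt_sq (by positivity)
  have hcontr : B * (2 * Real.sqrt δ) ≤ 1/2 := by
    have h1 : B * (2 * Real.sqrt δ) ≤ B * (2 * (1/(4*(B+1)))) := by
      apply mul_le_mul_of_nonneg_left _ hB
      linarith
    have h2 : B * (2 * (1/(4*(B+1)))) ≤ 1/2 := by
      have hb1 : (0:ℝ) < B + 1 := by linarith
      rw [show B * (2 * (1/(4*(B+1)))) = B/(2*(B+1)) by field_simp; ring]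
      rw [div_le_div_iff₀ (by positivity) (by norm_num)]
      linarith
    linarith
  set N : ℕ := ⌈T/δ⌉₊ with hNdef
  have hTN : T ≤ N * δ := by
    have := Nat.le_ceil (T/δ)
    calc T = (T/δ) * δ := by field_simp
      _ ≤ N * δ := mul_le_mul_of_nonneg_right this hδ0.le
  refine ⟨gronC B T N, lt_of_lt_of_le one_pos (gronC_ge_one B T hB N), ?_⟩
  intro A S hA hSm hS0 ⟨M, hM⟩ hineq
  -- WLOG M ≥ 0
  have hM0 : ∀ t ∈ Icc (0:ℝ) T, S t ≤ max M 0 := fun t ht => le_max_of_le_left (hM t ht)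
  set M' := max M 0 with hM'def
  have hM'0 : 0 ≤ M' := le_max_right _ _
  -- main induction
  have main : ∀ k : ℕ, ∀ t ∈ Icc (0:ℝ) T, t ≤ k * δ → S t ≤ gronC B T k * A := by
    intro k
    induction k with
    | zero =>
      intro t ht h0
      have ht0 : t = 0 := le_antisymm (by simpa using h0) ht.1
      have := hineq t ht
      rw [ht0] at this ⊢
      simp only [intervalIntegral.integral_same, mul_zero, add_zero] at this
      simpa [gronC_zero] using this
    | succ k ih =>
      intro t ht htk
      -- inner induction
      set L : ℝ := gronC B T (k+1) * A with hLdef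
      have hck : (0:ℝ) ≤ gronC B T k * A :=
        mul_nonneg (le_trans zero_le_one (gronC_ge_one B T hB k)) hA
      have hL0 : 0 ≤ L := mul_nonneg (le_trans zero_le_one (gronC_ge_one B T hB (k+1))) hA
      set E : ℝ := max (M' - L) 0 with hEdef
      have hE0 : 0 ≤ E := le_max_right _ _
      have inner : ∀ j : ℕ, ∀ t' ∈ Icc (0:ℝ) T, t' ≤ (k+1) * δ →
          S t' ≤ L + (1/2)^j * E := by
        intro j
        induction j with
        | zero =>
          intro t' ht' _
          have : S t' ≤ M' := hM0 t' ht'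
          have : M' ≤ L + E := by
            rcases le_total (M' - L) 0 with h | h
            · have : E = 0 := max_eq_right h
              rw [this]; linarith
            · have : E = M' - L := max_eq_left h
              rw [this]; linarith
          simp only [pow_zero, one_mul]
          linarith
        | succ j ihj =>
          intro t' ht' ht'k
          set p : ℝ := max (t' - δ) 0 with hpdef
          have hp0 : 0 ≤ p := le_max_right _ _
          have hpt : p ≤ t' := max_le (by linarith) ht'.1
          have hpk : p ≤ k * δ := by
            apply max_le
            · have : ((k:ℝ)+1) * δ = k * δ + δ := by ring
              push_cast at ht'k ⊢
              linarith
            · positivity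
          have htp : t' - p ≤ δ := by
            have : t' - δ ≤ p := le_max_left _ _
            linarith
          -- integrability
          have hbdM : ∀ s ∈ Icc (0:ℝ) t', 0 ≤ S s ∧ S s ≤ M' := by
            intro s hs
            have hs' : s ∈ Icc (0:ℝ) T := ⟨hs.1, le_trans hs.2 ht'.2⟩
            exact ⟨hS0 s hs', hM0 s hs'⟩
          have hint1 : IntervalIntegrable (fun s => S s / Real.sqrt (t' - s)) volume 0 p :=
            f_intable S hSm t' 0 p M' hp0 hpt hM'0
              (fun s hs => hbdM s ⟨hs.1, le_trans hs.2 hpt⟩)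
          have hint2 : IntervalIntegrable (fun s => S s / Real.sqrt (t' - s)) volume p t' :=
            f_intable S hSm t' p t' M' hpt le_rfl hM'0
              (fun s hs => hbdM s ⟨le_trans hp0 hs.1, hs.2⟩)
          have hsplit : ∫ s in (0:ℝ)..t', S s / Real.sqrt (t' - s)
              = (∫ s in (0:ℝ)..p, S s / Real.sqrt (t' - s))
                + ∫ s in p..t', S s / Real.sqrt (t' - s) :=
            (intervalIntegral.integral_add_adjacent_intervals hint1 hint2).symm
          -- first integral bound
          have hb1 : ∫ s in (0:ℝ)..p, S s / Real.sqrt (t' - s)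
              ≤ (gronC B T k * A) * (2 * Real.sqrt T) := by
            have h1 : ∫ s in (0:ℝ)..p, S s / Real.sqrt (t' - s)
                ≤ (gronC B T k * A) * (2*Real.sqrt (t' - 0) - 2*Real.sqrt (t' - p)) := by
              apply f_int_le S hSm t' 0 p (gronC B T k * A) hp0 hpt hck
              intro s hs
              have hs' : s ∈ Icc (0:ℝ) T := ⟨hs.1, le_trans (le_trans hs.2 hpt) ht'.2⟩
              exact ⟨hS0 s hs', ih s hs' (le_trans hs.2 hpk)⟩
            have h2 : 2*Real.sqrt (t' - 0) - 2*Real.sqrt (t' - p) ≤ 2 * Real.sqrt T := by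
              have : Real.sqrt (t' - 0) ≤ Real.sqrt T := Real.sqrt_le_sqrt (by linarith [ht'.2])
              have := Real.sqrt_nonneg (t' - p)
              linarith
            calc ∫ s in (0:ℝ)..p, S s / Real.sqrt (t' - s)
                ≤ (gronC B T k * A) * (2*Real.sqrt (t' - 0) - 2*Real.sqrt (t' - p)) := h1
              _ ≤ (gronC B T k * A) * (2 * Real.sqrt T) :=
                  mul_le_mul_of_nonneg_left h2 hck
          -- second integral bound
          have hKj : (0:ℝ) ≤ L + (1/2)^j * E := by positivity
          have hb2 : ∫ s in p..t', S s / Real.sqrt (t' - s)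
              ≤ (L + (1/2)^j * E) * (2 * Real.sqrt δ) := by
            have h1 : ∫ s in p..t', S s / Real.sqrt (t' - s)
                ≤ (L + (1/2)^j * E) * (2*Real.sqrt (t' - p) - 2*Real.sqrt (t' - t')) := by
              apply f_int_le S hSm t' p t' (L + (1/2)^j * E) hpt le_rfl hKj
              intro s hs
              have hs' : s ∈ Icc (0:ℝ) T := ⟨le_trans hp0 hs.1, le_trans hs.2 ht'.2⟩
              exact ⟨hS0 s hs', ihj s hs' (le_trans hs.2 ht'k)⟩
            have h2 : 2*Real.sqrt (t' - p) - 2*Real.sqrt (t' - t') ≤ 2 * Real.sqrt δ := by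
              have : Real.sqrt (t' - p) ≤ Real.sqrt δ := Real.sqrt_le_sqrt htp
              have := Real.sqrt_nonneg (t' - t')
              linarith
            calc ∫ s in p..t', S s / Real.sqrt (t' - s)
                ≤ (L + (1/2)^j * E) * (2*Real.sqrt (t' - p) - 2*Real.sqrt (t' - t')) := h1
              _ ≤ (L + (1/2)^j * E) * (2 * Real.sqrt δ) :=
                  mul_le_mul_of_nonneg_left h2 hKj
          -- combine
          have hmain := hineq t' ht'
          rw [hsplit] at hmain
          have hB2 : B * ((L + (1/2)^j * E) * (2 * Real.sqrt δ))
              ≤ (1/2) * (L + (1/2)^j * E) := by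
            have : (L + (1/2)^j * E) * (B * (2 * Real.sqrt δ))
                ≤ (L + (1/2)^j * E) * (1/2) :=
              mul_le_mul_of_nonneg_left hcontr hKj
            linarith [this]
          have hLval : L = 2*A + 4*B*Real.sqrt T * (gronC B T k * A) := by
            rw [hLdef, gronC_succ]; ring
          have hBint1 : B * (∫ s in (0:ℝ)..p, S s / Real.sqrt (t' - s))
              ≤ B * ((gronC B T k * A) * (2 * Real.sqrt T)) :=
            mul_le_mul_of_nonneg_left hb1 hB
          have hBint2 : B * (∫ s in p..t', S s / Real.sqrt (t' - s))
              ≤ B * ((L + (1/2)^j * E) * (2 * Real.sqrt δ)) :=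
            mul_le_mul_of_nonneg_left hb2 hB
          have : S t' ≤ A + B * ((gronC B T k * A) * (2 * Real.sqrt T))
              + (1/2) * (L + (1/2)^j * E) := by
            have := hmain
            rw [mul_add] at this
            linarith
          calc S t' ≤ A + B * ((gronC B T k * A) * (2 * Real.sqrt T))
                + (1/2) * (L + (1/2)^j * E) := this
            _ = L + (1/2)^(j+1) * E := by rw [hLval]; ring
      -- take limit j → ∞
      have hlim : Filter.Tendsto (fun j : ℕ => L + (1/2)^j * E) Filter.atTop (nhds L) := by
        have h1 : Filter.Tendsto (fun j : ℕ => ((1:ℝ)/2)^j) Filter.atTop (nhds 0) :=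
          tendsto_pow_atTop_nhds_zero_of_lt_one (by norm_num) (by norm_num)
        have h2 := (h1.mul_const E).const_add L
        simpa using h2
      exact ge_of_tendsto' hlim (fun j => inner j t ht (by push_cast at htk ⊢; linarith))
  intro t ht
  exact main N t ht (le_trans ht.2 hTN)
end

section
/- Singular Gronwall with singular forcing: Let T > 0 and S : (0, T] → [0, ∞) be measurable and bounded, satisfying S(t) ≤ D₁ ε/√t + D₂ ε + D₃ ∫₀^t S(s)/√(t−s) ds for all t ∈ (0, T], where D₁, D₂, D₃ ≥ 0 and ε > 0. Then for each fixed t ∈ (0, T] there is a constant C = C(D₁, D₂, D₃, T, t) such that S(t) ≤ C ε. -/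
/-!
The weight `√s` removes the singularity of the forcing: `w(s) = √s S(s)` satisfies
`w(s) ≤ (D₁ + D₂ √T) ε + D₃ √s ∫₀ˢ w(r) / (√r √(s - r)) dr`. Since
`1 / (√r √(s - r)) ≤ (1 / √r + 1 / √(s - r)) / √s`, the part of the integral over a window
`(s - δ, s]` is at most `4 √δ` times the supremum of `w` there, which is finite because `S` is
bounded. Choosing `8 D₃ √δ ≤ 1` this part is absorbed into the supremum, so a bound
`w ≤ K ε` on `(0, a]` extends to `(0, a + δ]` with `K` replaced by `2 (D₁ + D₂ √T) + 8 D₃ √T K`;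
`⌈T / δ⌉` such steps reach `t`. The bound on `S` enters only through the finiteness of the
supremum, so the constant does not depend on it.
-/

open Set MeasureTheory intervalIntegral

lemma one_div_sqrt_eq_rpow : (fun r : ℝ => 1 / √r) = fun r => r ^ (-(1 / 2) : ℝ) := by
  funext r
  rcases lt_trichotomy r 0 with h | h | h
  · rw [Real.sqrt_eq_zero_of_nonpos h.le, Real.rpow_def_of_neg h]
    have : Real.cos (2⁻¹ * Real.pi) = 0 := by rw [inv_mul_eq_div, Real.cos_pi_div_two]
    simp [this]
  · simp [h]
  · rw [Real.rpow_neg h.le, ← Real.sqrt_eq_rpow, one_div]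

lemma intervalIntegrable_one_div_sqrt (a b : ℝ) :
    IntervalIntegrable (fun r => 1 / √r) volume a b := by
  rw [one_div_sqrt_eq_rpow]
  exact intervalIntegrable_rpow' (by norm_num)

lemma integral_one_div_sqrt (a b : ℝ) : ∫ r in a..b, 1 / √r = 2 * √b - 2 * √a := by
  rw [one_div_sqrt_eq_rpow, integral_rpow (Or.inl (by norm_num))]
  norm_num
  rw [← Real.sqrt_eq_rpow, ← Real.sqrt_eq_rpow]
  ring

lemma intervalIntegrable_one_div_sqrt_sub (a b s : ℝ) :
    IntervalIntegrable (fun r => 1 / √(s - r)) volume a b := by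
  simpa using (intervalIntegrable_one_div_sqrt (s - a) (s - b)).comp_sub_left s

lemma integral_one_div_sqrt_sub (a b s : ℝ) :
    ∫ r in a..b, 1 / √(s - r) = 2 * √(s - a) - 2 * √(s - b) := by
  rw [integral_comp_sub_left (fun r => 1 / √r) s, integral_one_div_sqrt]

lemma one_div_sqrt_mul_sqrt_sub_le {r s : ℝ} (hr : 0 < r) (hrs : r ≤ s) :
    1 / (√r * √(s - r)) ≤ (1 / √r + 1 / √(s - r)) / √s := by
  have hsr : 0 < √r := Real.sqrt_pos.2 hr
  have hss : 0 < √s := Real.sqrt_pos.2 (hr.trans_le hrs)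
  rcases (sub_nonneg.2 hrs).eq_or_lt with h | h
  · rw [← h, Real.sqrt_zero, mul_zero, div_zero]
    positivity
  have hsd : 0 < √(s - r) := Real.sqrt_pos.2 h
  have hsub : √s ≤ √r + √(s - r) := by
    rw [Real.sqrt_le_left (by positivity)]
    nlinarith [Real.sq_sqrt hr.le, Real.sq_sqrt h.le, mul_pos hsr hsd]
  rw [div_add_div _ _ hsr.ne' hsd.ne', div_div, div_le_div_iff₀ (by positivity) (by positivity)]
  nlinarith [mul_pos hsr hsd]

lemma div_sqrt_sub_le_of_sqrt_mul_le {r s x K : ℝ} (hr : 0 < r) (hrs : r ≤ s) (hx : 0 ≤ x)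
    (hxK : √r * x ≤ K) : x / √(s - r) ≤ K / √s * (1 / √r + 1 / √(s - r)) := by
  have hsr : 0 < √r := Real.sqrt_pos.2 hr
  have hK : 0 ≤ K := (mul_nonneg hsr.le hx).trans hxK
  calc x / √(s - r) ≤ K / √r / √(s - r) := by
        gcongr
        rwa [le_div_iff₀ hsr, mul_comm]
    _ = K * (1 / (√r * √(s - r))) := by ring
    _ ≤ K * ((1 / √r + 1 / √(s - r)) / √s) :=
        mul_le_mul_of_nonneg_left (one_div_sqrt_mul_sqrt_sub_le hr hrs) hK
    _ = K / √s * (1 / √r + 1 / √(s - r)) := by ring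

section AbelKernel

variable {g : ℝ → ℝ} {a b s K : ℝ}

lemma intervalIntegrable_div_sqrt_sub (hg_meas : Measurable g) (ha : 0 ≤ a) (hab : a ≤ b)
    (hbs : b ≤ s) (hg : ∀ r ∈ Ioc a b, 0 ≤ g r ∧ √r * g r ≤ K) :
    IntervalIntegrable (fun r => g r / √(s - r)) volume a b := by
  rw [intervalIntegrable_iff_integrableOn_Ioc_of_le hab]
  refine Integrable.mono' (g := fun r => K / √s * (1 / √r + 1 / √(s - r))) ?_
    (hg_meas.div (by fun_prop)).aestronglyMeasurable ?_
  · exact (intervalIntegrable_iff_integrableOn_Ioc_of_le hab).1 <|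
      ((intervalIntegrable_one_div_sqrt a b).add
        (intervalIntegrable_one_div_sqrt_sub a b s)).const_mul _
  · filter_upwards [ae_restrict_mem measurableSet_Ioc] with r hr
    rw [Real.norm_of_nonneg (div_nonneg (hg r hr).1 (Real.sqrt_nonneg _))]
    exact div_sqrt_sub_le_of_sqrt_mul_le (ha.trans_lt hr.1) (hr.2.trans hbs) (hg r hr).1 (hg r hr).2

lemma sqrt_mul_integral_div_sqrt_sub_le (hs : 0 < s) (ha : 0 ≤ a) (hab : a ≤ b) (hbs : b ≤ s)
    (hg : ∀ r ∈ Ioc a b, 0 ≤ g r ∧ √r * g r ≤ K) :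
    √s * ∫ r in a..b, g r / √(s - r) ≤ 2 * K * (√b - √a + √(s - a) - √(s - b)) := by
  have hK_int : IntervalIntegrable (fun r => K / √s * (1 / √r + 1 / √(s - r))) volume a b :=
    ((intervalIntegrable_one_div_sqrt a b).add
      (intervalIntegrable_one_div_sqrt_sub a b s)).const_mul _
  have hle : ∫ r in a..b, g r / √(s - r) ≤ ∫ r in a..b, K / √s * (1 / √r + 1 / √(s - r)) := by
    rw [integral_of_le hab, integral_of_le hab]
    refine integral_mono_of_nonneg ?_
      ((intervalIntegrable_iff_integrableOn_Ioc_of_le hab).1 hK_int) ?_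
    · filter_upwards [ae_restrict_mem measurableSet_Ioc] with r hr
      exact div_nonneg (hg r hr).1 (Real.sqrt_nonneg _)
    · filter_upwards [ae_restrict_mem measurableSet_Ioc] with r hr
      exact div_sqrt_sub_le_of_sqrt_mul_le (ha.trans_lt hr.1) (hr.2.trans hbs) (hg r hr).1
        (hg r hr).2
  rw [intervalIntegral.integral_const_mul, integral_add (intervalIntegrable_one_div_sqrt a b)
    (intervalIntegrable_one_div_sqrt_sub a b s), integral_one_div_sqrt,
    integral_one_div_sqrt_sub] at hle
  calc √s * ∫ r in a..b, g r / √(s - r)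
      ≤ √s * (K / √s * (2 * √b - 2 * √a + (2 * √(s - a) - 2 * √(s - b)))) :=
        mul_le_mul_of_nonneg_left hle (Real.sqrt_nonneg s)
    _ = 2 * K * (√b - √a + √(s - a) - √(s - b)) := by
        field_simp [(Real.sqrt_pos.2 hs).ne']
        ring

lemma sqrt_mul_integral_div_sqrt_sub_le_of_split {p W : ℝ} (hg_meas : Measurable g) (hs : 0 < s)
    (hp : 0 ≤ p) (hps : p ≤ s) (hK : 0 ≤ K) (hW : 0 ≤ W)
    (hgK : ∀ r ∈ Ioc 0 p, 0 ≤ g r ∧ √r * g r ≤ K) (hgW : ∀ r ∈ Ioc p s, 0 ≤ g r ∧ √r * g r ≤ W) :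
    √s * ∫ r in 0..s, g r / √(s - r) ≤ 4 * K * √s + 4 * W * √(s - p) := by
  rw [← integral_add_adjacent_intervals
    (intervalIntegrable_div_sqrt_sub hg_meas le_rfl hp hps hgK)
    (intervalIntegrable_div_sqrt_sub hg_meas hp hps le_rfl hgW), mul_add]
  have h_init := sqrt_mul_integral_div_sqrt_sub_le hs le_rfl hp hps hgK
  have h_window := sqrt_mul_integral_div_sqrt_sub_le hs hp hps le_rfl hgW
  have hsp : √s - √p ≤ √(s - p) := by
    rw [sub_le_iff_le_add, Real.sqrt_le_left (by positivity)]
    nlinarith [Real.sq_sqrt hp, Real.sq_sqrt (sub_nonneg.2 hps), Real.sqrt_nonneg p,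
      Real.sqrt_nonneg (s - p)]
  have hps' : √p ≤ √s := Real.sqrt_le_sqrt hps
  simp only [sub_zero, sub_self, Real.sqrt_zero] at h_init h_window
  nlinarith [Real.sqrt_nonneg (s - p)]

end AbelKernel

lemma le_two_mul_of_le_add_half_csSup {α : Type*} {f : α → ℝ} {E : Set α} {c : ℝ}
    (hbdd : BddAbove (f '' E)) (h : ∀ x ∈ E, f x ≤ c + sSup (f '' E) / 2) :
    ∀ x ∈ E, f x ≤ 2 * c := by
  intro x hx
  have hsup : sSup (f '' E) ≤ c + sSup (f '' E) / 2 :=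
    csSup_le ⟨f x, mem_image_of_mem f hx⟩ (forall_mem_image.2 h)
  linarith [le_csSup hbdd (mem_image_of_mem f hx)]

section SingularGronwall

variable {T D₁ D₂ D₃ ε : ℝ} {S : ℝ → ℝ}

lemma sqrt_mul_le_of_le_singular_forcing {s : ℝ} (hs : 0 < s)
    (h : S s ≤ D₁ * ε / √s + D₂ * ε + D₃ * ∫ r in (0:ℝ)..s, S r / √(s - r)) :
    √s * S s ≤ D₁ * ε + D₂ * ε * √s + D₃ * (√s * ∫ r in (0:ℝ)..s, S r / √(s - r)) := by
  calc √s * S s ≤ √s * (D₁ * ε / √s + D₂ * ε + D₃ * ∫ r in (0:ℝ)..s, S r / √(s - r)) :=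
        mul_le_mul_of_nonneg_left h (Real.sqrt_nonneg s)
    _ = _ := by
        field_simp [(Real.sqrt_pos.2 hs).ne']

lemma sqrt_mul_le_succ_window {δ a K M : ℝ} (hD₂ : 0 ≤ D₂) (hD₃ : 0 ≤ D₃) (hε : 0 ≤ ε)
    (hδ₀ : 0 ≤ δ) (hδ : 8 * D₃ * √δ ≤ 1) (hK : 0 ≤ K) (hS : Measurable S)
    (hS₀ : ∀ s ∈ Ioc 0 T, 0 ≤ S s) (hM : ∀ s ∈ Ioc 0 T, S s ≤ M)
    (hineq : ∀ s ∈ Ioc 0 T, S s ≤ D₁ * ε / √s + D₂ * ε +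
      D₃ * ∫ r in (0:ℝ)..s, S r / √(s - r))
    (ha : ∀ s ∈ Ioc 0 T ∩ Iic a, √s * S s ≤ K) :
    ∀ s ∈ Ioc 0 T ∩ Iic (a + δ), √s * S s ≤ 2 * ((D₁ + D₂ * √T) * ε + 4 * D₃ * √T * K) := by
  set E := Ioc 0 T ∩ Iic (a + δ)
  have hbdd : BddAbove ((fun r => √r * S r) '' E) := by
    refine ⟨√T * M, forall_mem_image.2 fun r hr => ?_⟩
    exact mul_le_mul (Real.sqrt_le_sqrt hr.1.2) (hM r hr.1) (hS₀ r hr.1) (Real.sqrt_nonneg T)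
  refine le_two_mul_of_le_add_half_csSup hbdd fun s hs => ?_
  set W := sSup ((fun r => √r * S r) '' E)
  have hW : ∀ r ∈ E, √r * S r ≤ W := fun r hr => le_csSup hbdd (mem_image_of_mem _ hr)
  have hW₀ : 0 ≤ W := (mul_nonneg (Real.sqrt_nonneg s) (hS₀ s hs.1)).trans (hW s hs)
  obtain ⟨⟨hs₀, hsT⟩, hsa⟩ := hs
  set p := max (s - δ) 0
  have hps : p ≤ s := max_le (by linarith) hs₀.le
  have hsp : √(s - p) ≤ √δ := Real.sqrt_le_sqrt (by linarith [le_max_left (s - δ) 0])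
  have h_init : ∀ r ∈ Ioc 0 p, 0 ≤ S r ∧ √r * S r ≤ K := by
    intro r ⟨hr₀, hrp⟩
    have hrδ : r ≤ s - δ := (le_max_iff.1 hrp).resolve_right hr₀.not_ge
    have hrT : r ∈ Ioc 0 T := ⟨hr₀, by linarith⟩
    exact ⟨hS₀ r hrT, ha r ⟨hrT, mem_Iic.2 (by linarith [mem_Iic.1 hsa])⟩⟩
  have h_window : ∀ r ∈ Ioc p s, 0 ≤ S r ∧ √r * S r ≤ W := by
    intro r ⟨hpr, hrs⟩
    have hrE : r ∈ E := ⟨⟨(le_max_right _ _).trans_lt hpr, hrs.trans hsT⟩, hrs.trans hsa⟩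
    exact ⟨hS₀ r hrE.1, hW r hrE⟩
  have h_split := sqrt_mul_integral_div_sqrt_sub_le_of_split hS hs₀ (le_max_right _ _) hps hK hW₀
    h_init h_window
  calc √s * S s ≤ D₁ * ε + D₂ * ε * √s + D₃ * (√s * ∫ r in (0:ℝ)..s, S r / √(s - r)) :=
        sqrt_mul_le_of_le_singular_forcing hs₀ (hineq s ⟨hs₀, hsT⟩)
    _ ≤ D₁ * ε + D₂ * ε * √T + D₃ * (4 * K * √T + 4 * W * √δ) := by
        gcongr
        exact h_split.trans (by gcongr)
    _ ≤ (D₁ + D₂ * √T) * ε + 4 * D₃ * √T * K + W / 2 := by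
        nlinarith [mul_le_mul_of_nonneg_left hδ hW₀]

lemma sqrt_mul_le_of_le_nat_mul {δ M : ℝ} (hD₁ : 0 ≤ D₁) (hD₂ : 0 ≤ D₂) (hD₃ : 0 ≤ D₃)
    (hε : 0 ≤ ε) (hδ₀ : 0 ≤ δ) (hδ : 8 * D₃ * √δ ≤ 1) (hS : Measurable S)
    (hS₀ : ∀ s ∈ Ioc 0 T, 0 ≤ S s) (hM : ∀ s ∈ Ioc 0 T, S s ≤ M)
    (hineq : ∀ s ∈ Ioc 0 T, S s ≤ D₁ * ε / √s + D₂ * ε +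
      D₃ * ∫ r in (0:ℝ)..s, S r / √(s - r)) (k : ℕ) :
    ∀ s ∈ Ioc 0 T ∩ Iic (k * δ),
      √s * S s ≤ 2 * (D₁ + D₂ * √T) * (1 + 8 * D₃ * √T) ^ k * ε := by
  induction k with
  | zero =>
    rintro s ⟨⟨hs₀, -⟩, hs⟩
    simp only [Nat.cast_zero, zero_mul, mem_Iic] at hs
    linarith
  | succ k ih =>
    have hA : 0 ≤ D₁ + D₂ * √T := by positivity
    have hB : 0 ≤ 8 * D₃ * √T := by positivity
    have hpow : 1 ≤ (1 + 8 * D₃ * √T) ^ k := one_le_pow₀ (by linarith)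
    intro s hs
    refine (sqrt_mul_le_succ_window hD₂ hD₃ hε hδ₀ hδ (by positivity) hS hS₀ hM hineq ih s
      ⟨hs.1, mem_Iic.2 (by have := mem_Iic.1 hs.2; push_cast at this; linarith)⟩).trans ?_
    rw [pow_succ]
    nlinarith [mul_nonneg (mul_nonneg hA hε) (sub_nonneg.2 hpow)]

end SingularGronwall

theorem singular_gronwall_singular_forcing_general (T D₁ D₂ D₃ : ℝ)
    (h1 : 0 ≤ D₁) (h2 : 0 ≤ D₂) (h3 : 0 ≤ D₃) (t : ℝ) (ht : t ∈ Ioc (0:ℝ) T) :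
    ∃ C : ℝ, ∀ (ε : ℝ) (S : ℝ → ℝ), 0 < ε → Measurable S →
      (∀ s ∈ Ioc (0:ℝ) T, 0 ≤ S s) → (∃ M, ∀ s ∈ Ioc (0:ℝ) T, S s ≤ M) →
      (∀ s ∈ Ioc (0:ℝ) T, S s ≤ D₁ * ε / Real.sqrt s + D₂ * ε +
          D₃ * ∫ r in (0:ℝ)..s, S r / Real.sqrt (s - r)) →
      S t ≤ C * ε := by
  obtain ⟨δ, hδ₀, hδ⟩ : ∃ δ : ℝ, 0 < δ ∧ 8 * D₃ * √δ ≤ 1 := by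
    refine ⟨(8 * D₃ + 1)⁻¹ ^ 2, by positivity, ?_⟩
    rw [Real.sqrt_sq (by positivity), ← div_eq_mul_inv, div_le_one (by positivity)]
    linarith
  set k := ⌈T / δ⌉₊
  refine ⟨2 * (D₁ + D₂ * √T) * (1 + 8 * D₃ * √T) ^ k / √t,
    fun ε S hε hS hS₀ ⟨M, hM⟩ hineq => ?_⟩
  have htk : t ≤ k * δ := ht.2.trans ((div_le_iff₀ hδ₀).1 (Nat.le_ceil _))
  have h := sqrt_mul_le_of_le_nat_mul h1 h2 h3 hε.le hδ₀.le hδ hS hS₀ hM hineq k t ⟨ht, htk⟩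
  rw [div_mul_eq_mul_div, le_div_iff₀ (Real.sqrt_pos.2 ht.1)]
  linarith

theorem singular_gronwall_singular_forcing (T D₁ D₂ D₃ : ℝ) (hT : 0 < T)
    (h1 : 0 ≤ D₁) (h2 : 0 ≤ D₂) (h3 : 0 ≤ D₃) (t : ℝ) (ht : t ∈ Ioc (0:ℝ) T) :
    ∃ C : ℝ, ∀ (ε : ℝ) (S : ℝ → ℝ), 0 < ε → Measurable S →
      (∀ s ∈ Ioc (0:ℝ) T, 0 ≤ S s) → (∃ M, ∀ s ∈ Ioc (0:ℝ) T, S s ≤ M) →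
      (∀ s ∈ Ioc (0:ℝ) T, S s ≤ D₁ * ε / Real.sqrt s + D₂ * ε +
          D₃ * ∫ r in (0:ℝ)..s, S r / Real.sqrt (s - r)) →
      S t ≤ C * ε :=
  singular_gronwall_singular_forcing_general T D₁ D₂ D₃ h1 h2 h3 t ht
end
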